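/- With notation as in the deformation of a comodule algebra: if a ∈ M₀, ξ ∈ H, and V, ad_V, σ, ρ_σ are as given, then the twisted coaction is covariant: V(ρ_σ(a)ξ) = a₍₀₎ξ₍₀₎ σ⁻¹(a₍₁₎₍₂₎, ξ₍₁₎₍₂₎) ⊗ a₍₁₎₍₁₎ ξ₍₁₎₍₁₎, and this equals (ρ_σ ⊗ ·_σ)(ad_V ⊗ V-structure) applied to (a, ξ); i.e. ad_{V_σ}(ρ_σ(a)) ∘ V_σ = V_σ ∘ ρ_σ(a) where V_σ = V as a linear map and the Q₀-factor carries the σ-twisted product. -/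

import Mathlib

open TensorProduct

noncomputable section

namespace CocycleTwist

variable (A : Type) [Ring A] [HopfAlgebra ℂ A]

/-- Convolution product of two linear maps from a coalgebra into an algebra. -/
def conv {C B : Type} [AddCommGroup C] [Module ℂ C] [Coalgebra ℂ C]
    [Ring B] [Algebra ℂ B] (f g : C →ₗ[ℂ] B) : C →ₗ[ℂ] B :=
  LinearMap.mul' ℂ B ∘ₗ TensorProduct.map f g ∘ₗ Coalgebra.comul

/-- A scalar-valued functional viewed as a map into `A`. -/
def toA {C : Type} [AddCommGroup C] [Module ℂ C] (f : C →ₗ[ℂ] ℂ) : C →ₗ[ℂ] A :=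
  Algebra.linearMap ℂ A ∘ₗ f

/-- The twisted multiplication `a ·_σ b = τ(a₁,b₁) (a₂ ⋅ b₂) τ'(a₃,b₃)` associated with a pair of
functionals `τ, τ'` on `A ⊗ A` and a multiplication map `m`. -/
def mulTwOf (m : A ⊗[ℂ] A →ₗ[ℂ] A) (τ τ' : A ⊗[ℂ] A →ₗ[ℂ] ℂ) : A ⊗[ℂ] A →ₗ[ℂ] A :=
  conv (toA A τ) (conv m (toA A τ'))

/-- Left-hand side of the 2-cocycle identity: `σ(b₁,c₁) σ(a, b₂c₂)` as a functional on
`A ⊗ (A ⊗ A)`. -/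
def cocycleL (σ : A ⊗[ℂ] A →ₗ[ℂ] ℂ) : A ⊗[ℂ] (A ⊗[ℂ] A) →ₗ[ℂ] ℂ :=
  conv (LinearMap.mul' ℂ ℂ ∘ₗ TensorProduct.map Coalgebra.counit σ)
    (σ ∘ₗ TensorProduct.map LinearMap.id (LinearMap.mul' ℂ A))

/-- Right-hand side of the 2-cocycle identity: `σ(a₁,b₁) σ(a₂b₂, c)` as a functional on
`A ⊗ (A ⊗ A)`. -/
def cocycleR (σ : A ⊗[ℂ] A →ₗ[ℂ] ℂ) : A ⊗[ℂ] (A ⊗[ℂ] A) →ₗ[ℂ] ℂ :=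
  conv
    (LinearMap.mul' ℂ ℂ ∘ₗ TensorProduct.map σ Coalgebra.counit ∘ₗ
      (TensorProduct.assoc ℂ A A A).symm.toLinearMap)
    (σ ∘ₗ TensorProduct.map (LinearMap.mul' ℂ A) LinearMap.id ∘ₗ
      (TensorProduct.assoc ℂ A A A).symm.toLinearMap)

/-- The 2-cocycle identity `σ(b₁,c₁) σ(a, b₂c₂) = σ(a₁,b₁) σ(a₂b₂, c)`. -/
def IsCocycle (σ : A ⊗[ℂ] A →ₗ[ℂ] ℂ) : Prop := cocycleL A σ = cocycleR A σ

/-- Normalization: `σ(a,1) = σ(1,a) = ε(a)`. -/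
def IsNormalized (σ : A ⊗[ℂ] A →ₗ[ℂ] ℂ) : Prop :=
  ∀ a : A, σ (a ⊗ₜ (1 : A)) = Coalgebra.counit a ∧ σ ((1 : A) ⊗ₜ a) = Coalgebra.counit a

/-- `σ` and `σinv` are convolution inverses of each other (the convolution unit on functionals on
the coalgebra `A ⊗ A` is its counit). -/
def AreConvInverse (σ σinv : A ⊗[ℂ] A →ₗ[ℂ] ℂ) : Prop :=
  conv σ σinv = (Coalgebra.counit : A ⊗[ℂ] A →ₗ[ℂ] ℂ) ∧
    conv σinv σ = (Coalgebra.counit : A ⊗[ℂ] A →ₗ[ℂ] ℂ)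

variable (H M : Type) [AddCommGroup H] [Module ℂ H] [Ring M] [Algebra ℂ M]

/-- The bilinear action `M ⊗ H → H` induced by an algebra representation `θ`. -/
def actB (θ : M →ₐ[ℂ] Module.End ℂ H) : M ⊗[ℂ] H →ₗ[ℂ] H :=
  TensorProduct.lift (θ.toLinearMap : M →ₗ[ℂ] (H →ₗ[ℂ] H))

/-- Combination map `(a ⊗ q) ⊗ (ξ ⊗ r) ↦ (a ξ) ⊗ (q r)`. -/
def comb (θ : M →ₐ[ℂ] Module.End ℂ H) : (M ⊗[ℂ] A) ⊗[ℂ] (H ⊗[ℂ] A) →ₗ[ℂ] H ⊗[ℂ] A :=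
  TensorProduct.map (actB H M θ) (LinearMap.mul' ℂ A) ∘ₗ
    (TensorProduct.tensorTensorTensorComm ℂ M A H A).toLinearMap

/-- Combination map `(a ⊗ q) ⊗ (ξ ⊗ r) ↦ σ⁻¹(q, r) • (a ξ)`. -/
def combσ (θ : M →ₐ[ℂ] Module.End ℂ H) (σinv : A ⊗[ℂ] A →ₗ[ℂ] ℂ) :
    (M ⊗[ℂ] A) ⊗[ℂ] (H ⊗[ℂ] A) →ₗ[ℂ] H :=
  (TensorProduct.rid ℂ H).toLinearMap ∘ₗ
    TensorProduct.map (actB H M θ) σinv ∘ₗ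
    (TensorProduct.tensorTensorTensorComm ℂ M A H A).toLinearMap

/-- `ρ_σ` as a bilinear map: `a ⊗ ξ ↦ a₍₀₎ ξ₍₀₎ σ⁻¹(a₍₁₎, ξ₍₁₎)`. -/
def rhoBil (V : H →ₗ[ℂ] H ⊗[ℂ] A) (adV : M →ₗ[ℂ] M ⊗[ℂ] A) (θ : M →ₐ[ℂ] Module.End ℂ H)
    (σinv : A ⊗[ℂ] A →ₗ[ℂ] ℂ) : M ⊗[ℂ] H →ₗ[ℂ] H :=
  combσ A H M θ σinv ∘ₗ TensorProduct.map adV V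

/-- The deformed representation `ρ_σ(a) ξ := a₍₀₎ ξ₍₀₎ σ⁻¹(a₍₁₎, ξ₍₁₎)`. -/
def rhoσ (V : H →ₗ[ℂ] H ⊗[ℂ] A) (adV : M →ₗ[ℂ] M ⊗[ℂ] A) (θ : M →ₐ[ℂ] Module.End ℂ H)
    (σinv : A ⊗[ℂ] A →ₗ[ℂ] ℂ) (a : M) : H →ₗ[ℂ] H :=
  rhoBil A H M V adV θ σinv ∘ₗ TensorProduct.mk ℂ M H a

/-- The twice-iterated coaction `a ↦ (a₍₀₎ ⊗ a₍₁₎) ⊗ a₍₂₎`. -/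
def coact₂ {N : Type} [AddCommGroup N] [Module ℂ N] (β : N →ₗ[ℂ] N ⊗[ℂ] A) :
    N →ₗ[ℂ] (N ⊗[ℂ] A) ⊗[ℂ] A :=
  TensorProduct.map β LinearMap.id ∘ₗ β

/-- `(a₀ ⊗ q) ⊗ (b₀ ⊗ r) ↦ σ(q, r) • (a₀ b₀)`. -/
def mulσaux (σ : A ⊗[ℂ] A →ₗ[ℂ] ℂ) : (M ⊗[ℂ] A) ⊗[ℂ] (M ⊗[ℂ] A) →ₗ[ℂ] M :=
  (TensorProduct.rid ℂ M).toLinearMap ∘ₗ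
    TensorProduct.map (LinearMap.mul' ℂ M) σ ∘ₗ
    (TensorProduct.tensorTensorTensorComm ℂ M A M A).toLinearMap

/-- The twisted product on `M₀` induced from the coaction:
`a ·_σ b = σ(a₍₁₎, b₍₁₎) (a₍₀₎ b₍₀₎) σ⁻¹(a₍₂₎, b₍₂₎)`. -/
def mulTwM (adV : M →ₗ[ℂ] M ⊗[ℂ] A) (σ σinv : A ⊗[ℂ] A →ₗ[ℂ] ℂ) (a b : M) : M :=
  ((TensorProduct.rid ℂ M).toLinearMap ∘ₗ
      TensorProduct.map (mulσaux A M σ) σinv ∘ₗ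
      (TensorProduct.tensorTensorTensorComm ℂ (M ⊗[ℂ] A) A (M ⊗[ℂ] A) A).toLinearMap)
    (coact₂ A adV a ⊗ₜ coact₂ A adV b)

section Hypotheses

variable (V : H →ₗ[ℂ] H ⊗[ℂ] A) (adV : M →ₗ[ℂ] M ⊗[ℂ] A) (θ : M →ₐ[ℂ] Module.End ℂ H)

/-- `V` is a counital coassociative coaction. -/
def IsCoaction {N : Type} [AddCommGroup N] [Module ℂ N] (β : N →ₗ[ℂ] N ⊗[ℂ] A) : Prop :=
  (TensorProduct.map LinearMap.id Coalgebra.comul ∘ₗ β =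
    (TensorProduct.assoc ℂ N A A).toLinearMap ∘ₗ TensorProduct.map β LinearMap.id ∘ₗ β) ∧
  ∀ ξ : N, (TensorProduct.rid ℂ N)
      ((TensorProduct.map LinearMap.id (Coalgebra.counit : A →ₗ[ℂ] ℂ)) (β ξ)) = ξ

/-- Compatibility: `V(aξ) = a₍₀₎ ξ₍₀₎ ⊗ a₍₁₎ ξ₍₁₎`. -/
def IsCovariant : Prop :=
  ∀ (a : M) (ξ : H), comb A H M θ (adV a ⊗ₜ V ξ) = V (θ a ξ)

end Hypotheses

/-- `(a₀ ⊗ a₁ ⊗ a₂) ⊗ (ξ₀ ⊗ ξ₁ ⊗ ξ₂) ↦ σ⁻¹(a₂, ξ₂) • (a₀ ξ₀ ⊗ a₁ ξ₁)`. -/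
def Θmap (θ : M →ₐ[ℂ] Module.End ℂ H) (σinv : A ⊗[ℂ] A →ₗ[ℂ] ℂ) :
    ((M ⊗[ℂ] A) ⊗[ℂ] A) ⊗[ℂ] ((H ⊗[ℂ] A) ⊗[ℂ] A) →ₗ[ℂ] H ⊗[ℂ] A :=
  (TensorProduct.rid ℂ (H ⊗[ℂ] A)).toLinearMap ∘ₗ
    TensorProduct.map (comb A H M θ) σinv ∘ₗ
    (TensorProduct.tensorTensorTensorComm ℂ (M ⊗[ℂ] A) A (H ⊗[ℂ] A) A).toLinearMap

/-- `(a₀ ⊗ a₁) ⊗ (ξ₀ ⊗ ξ₁) ↦ ρ_σ(a₀)ξ₀ ⊗ (a₁ ·_σ ξ₁)`, where `·_σ` is the twisted product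
on `A`. -/
def Θ'map (V : H →ₗ[ℂ] H ⊗[ℂ] A) (adV : M →ₗ[ℂ] M ⊗[ℂ] A) (θ : M →ₐ[ℂ] Module.End ℂ H)
    (σ σinv : A ⊗[ℂ] A →ₗ[ℂ] ℂ) :
    (M ⊗[ℂ] A) ⊗[ℂ] (H ⊗[ℂ] A) →ₗ[ℂ] H ⊗[ℂ] A :=
  TensorProduct.map (rhoBil A H M V adV θ σinv) (mulTwOf A (LinearMap.mul' ℂ A) σ σinv) ∘ₗ
    (TensorProduct.tensorTensorTensorComm ℂ M A H A).toLinearMap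


/-!
Let `W = adV ⊗ V` be the diagonal coaction of the coalgebra `A ⊗ A` on `M ⊗ H`; it is
coassociative because `adV` and `V` are. Covariance of `V` turns `V (ρ_σ(a) ξ)` into
`a₍₀₎ξ₍₀₎ ⊗ a₍₁₎ξ₍₁₎ σ⁻¹(a₍₂₎, ξ₍₂₎)`, which is the first identity. Coassociativity of `W` then
writes both `V (ρ_σ(a) ξ)` and `ρ_σ(a₍₀₎)ξ₍₀₎ ⊗ (a₍₁₎ ·_σ ξ₍₁₎)` as `a₍₀₎ξ₍₀₎ ⊗ φ(a₍₁₎ ⊗ ξ₍₁₎)`,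
with `φ` the convolution products `m * σ⁻¹` and `σ⁻¹ * (σ * m * σ⁻¹)` on `A ⊗ A` respectively;
these agree because `σ⁻¹ * σ = ε`.
-/

open scoped RingTheory.LinearMap

section Convolution

variable {C B : Type} [AddCommGroup C] [Module ℂ C] [Coalgebra ℂ C] [Ring B] [Algebra ℂ B]

open WithConv in
theorem conv_eq_ofConv_mul (f g : C →ₗ[ℂ] B) : conv f g = (toConv f * toConv g).ofConv := rfl

theorem conv_assoc (f g h : C →ₗ[ℂ] B) : conv (conv f g) h = conv f (conv g h) := by
  simp only [conv_eq_ofConv_mul, WithConv.toConv_ofConv, mul_assoc]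

theorem conv_counit_left (f : C →ₗ[ℂ] B) : conv (η ∘ₗ ε) f = f := by
  rw [conv_eq_ofConv_mul, ← LinearMap.convOne_def, one_mul, WithConv.ofConv_toConv]

theorem conv_toA (f g : C →ₗ[ℂ] ℂ) : conv (toA A f) (toA A g) = toA A (conv f g) :=
  (LinearMap.algHom_comp_convMul_distrib (Algebra.ofId ℂ A) (.toConv f) (.toConv g)).symm

theorem conv_toA_mulTwOf (m : A ⊗[ℂ] A →ₗ[ℂ] A) {σ σinv : A ⊗[ℂ] A →ₗ[ℂ] ℂ}
    (hinv : conv σinv σ = ε) :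
    conv (toA A σinv) (mulTwOf A m σ σinv) = conv m (toA A σinv) := by
  rw [mulTwOf, ← conv_assoc, conv_toA, hinv, toA, conv_counit_left]

end Convolution

section TensorMaps

variable {C D N P Y B : Type} [AddCommGroup C] [Module ℂ C] [AddCommGroup D] [Module ℂ D]
  [AddCommGroup N] [Module ℂ N] [AddCommGroup P] [Module ℂ P] [AddCommGroup Y] [Module ℂ Y]
  [Ring B] [Algebra ℂ B]

theorem rid_comp_map_comp (u : N →ₗ[ℂ] Y) (f : P →ₗ[ℂ] N) (s : C →ₗ[ℂ] ℂ) :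
    (TensorProduct.rid ℂ Y).toLinearMap ∘ₗ ((u ∘ₗ f) ⊗ₘ s) =
      u ∘ₗ (TensorProduct.rid ℂ N).toLinearMap ∘ₗ (f ⊗ₘ s) := by
  ext; simp

theorem map_rid_comp_map (f : N →ₗ[ℂ] Y) (s : C →ₗ[ℂ] ℂ) (g : C →ₗ[ℂ] B) :
    ((TensorProduct.rid ℂ Y).toLinearMap ∘ₗ (f ⊗ₘ s)) ⊗ₘ g =
      (f ⊗ₘ μ ∘ₗ (η ∘ₗ s ⊗ₘ g)) ∘ₗ (TensorProduct.assoc ℂ N C C).toLinearMap := by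
  ext x c c'
  simp [Algebra.smul_def, smul_tmul]

theorem rid_comp_map_map (f : N →ₗ[ℂ] Y) (g : C →ₗ[ℂ] B) (s : C →ₗ[ℂ] ℂ) :
    (TensorProduct.rid ℂ (Y ⊗[ℂ] B)).toLinearMap ∘ₗ ((f ⊗ₘ g) ⊗ₘ s) =
      (f ⊗ₘ μ ∘ₗ (g ⊗ₘ η ∘ₗ s)) ∘ₗ (TensorProduct.assoc ℂ N C C).toLinearMap := by
  ext x c c'
  simp [← Algebra.commutes, ← Algebra.smul_def, tmul_smul]

theorem tensorTensorTensorComm_comp_map_assoc :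
    (LinearMap.id ⊗ₘ (tensorTensorTensorComm ℂ C C D D).toLinearMap) ∘ₗ
      (tensorTensorTensorComm ℂ N (C ⊗[ℂ] C) P (D ⊗[ℂ] D)).toLinearMap ∘ₗ
      ((TensorProduct.assoc ℂ N C C).toLinearMap ⊗ₘ (TensorProduct.assoc ℂ P D D).toLinearMap) =
    (TensorProduct.assoc ℂ (N ⊗[ℂ] P) (C ⊗[ℂ] D) (C ⊗[ℂ] D)).toLinearMap ∘ₗ
      ((tensorTensorTensorComm ℂ N C P D).toLinearMap ⊗ₘ LinearMap.id) ∘ₗ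
      (tensorTensorTensorComm ℂ (N ⊗[ℂ] C) C (P ⊗[ℂ] D) D).toLinearMap := by
  ext; rfl

end TensorMaps

section Coaction

variable {C D N P Y B : Type} [AddCommGroup C] [Module ℂ C] [Coalgebra ℂ C]
  [AddCommGroup D] [Module ℂ D] [Coalgebra ℂ D] [AddCommGroup N] [Module ℂ N]
  [AddCommGroup P] [Module ℂ P] [AddCommGroup Y] [Module ℂ Y] [Ring B] [Algebra ℂ B]

def IsCoassoc (β : N →ₗ[ℂ] N ⊗[ℂ] C) : Prop :=
  (LinearMap.id ⊗ₘ δ) ∘ₗ β = (TensorProduct.assoc ℂ N C C).toLinearMap ∘ₗ (β ⊗ₘ LinearMap.id) ∘ₗ β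

def coactTensor (β : N →ₗ[ℂ] N ⊗[ℂ] C) (γ : P →ₗ[ℂ] P ⊗[ℂ] D) :
    N ⊗[ℂ] P →ₗ[ℂ] (N ⊗[ℂ] P) ⊗[ℂ] (C ⊗[ℂ] D) :=
  (tensorTensorTensorComm ℂ N C P D).toLinearMap ∘ₗ (β ⊗ₘ γ)

theorem IsCoassoc.coactTensor {β : N →ₗ[ℂ] N ⊗[ℂ] C} {γ : P →ₗ[ℂ] P ⊗[ℂ] D}
    (hβ : IsCoassoc β) (hγ : IsCoassoc γ) : IsCoassoc (coactTensor β γ) := by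
  have hδ : (LinearMap.id ⊗ₘ δ) ∘ₗ (tensorTensorTensorComm ℂ N C P D).toLinearMap =
      (LinearMap.id ⊗ₘ (tensorTensorTensorComm ℂ C C D D).toLinearMap) ∘ₗ
        (tensorTensorTensorComm ℂ N (C ⊗[ℂ] C) P (D ⊗[ℂ] D)).toLinearMap ∘ₗ
        ((LinearMap.id ⊗ₘ δ) ⊗ₘ (LinearMap.id ⊗ₘ δ)) := by
    ext; rfl
  calc (LinearMap.id ⊗ₘ δ) ∘ₗ (tensorTensorTensorComm ℂ N C P D).toLinearMap ∘ₗ (β ⊗ₘ γ)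
      = (LinearMap.id ⊗ₘ (tensorTensorTensorComm ℂ C C D D).toLinearMap) ∘ₗ
          (tensorTensorTensorComm ℂ N (C ⊗[ℂ] C) P (D ⊗[ℂ] D)).toLinearMap ∘ₗ
          ((LinearMap.id ⊗ₘ δ) ∘ₗ β ⊗ₘ (LinearMap.id ⊗ₘ δ) ∘ₗ γ) := by
        rw [← LinearMap.comp_assoc, hδ, map_comp]
        simp only [LinearMap.comp_assoc]
    _ = ((LinearMap.id ⊗ₘ (tensorTensorTensorComm ℂ C C D D).toLinearMap) ∘ₗ
          (tensorTensorTensorComm ℂ N (C ⊗[ℂ] C) P (D ⊗[ℂ] D)).toLinearMap ∘ₗ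
          ((TensorProduct.assoc ℂ N C C).toLinearMap ⊗ₘ
            (TensorProduct.assoc ℂ P D D).toLinearMap)) ∘ₗ
          ((β ⊗ₘ LinearMap.id) ⊗ₘ (γ ⊗ₘ LinearMap.id)) ∘ₗ (β ⊗ₘ γ) := by
        rw [← map_comp, LinearMap.comp_assoc, LinearMap.comp_assoc, ← map_comp, ← hβ, ← hγ]
    _ = (TensorProduct.assoc ℂ (N ⊗[ℂ] P) (C ⊗[ℂ] D) (C ⊗[ℂ] D)).toLinearMap ∘ₗ
          ((tensorTensorTensorComm ℂ N C P D).toLinearMap ∘ₗ (β ⊗ₘ γ) ⊗ₘ LinearMap.id) ∘ₗ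
          (tensorTensorTensorComm ℂ N C P D).toLinearMap ∘ₗ (β ⊗ₘ γ) := by
        rw [tensorTensorTensorComm_comp_map_assoc]
        simp only [LinearMap.comp_assoc]
        rw [← LinearMap.comp_assoc (β ⊗ₘ γ), tensorTensorTensorComm_comp_map, map_id,
          LinearMap.comp_assoc, ← LinearMap.comp_assoc _ (_ ⊗ₘ LinearMap.id) (_ ⊗ₘ LinearMap.id),
          ← map_comp, LinearMap.comp_id]

variable {W : N →ₗ[ℂ] N ⊗[ℂ] C}

theorem IsCoassoc.map_rid_comp_map_comp (hW : IsCoassoc W) (f : N →ₗ[ℂ] Y) (s : C →ₗ[ℂ] ℂ)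
    (g : C →ₗ[ℂ] B) :
    (((TensorProduct.rid ℂ Y).toLinearMap ∘ₗ (f ⊗ₘ s) ∘ₗ W) ⊗ₘ g) ∘ₗ W =
      (f ⊗ₘ conv (η ∘ₗ s) g) ∘ₗ W := by
  calc _ = (f ⊗ₘ μ ∘ₗ (η ∘ₗ s ⊗ₘ g)) ∘ₗ (TensorProduct.assoc ℂ N C C).toLinearMap ∘ₗ
          (W ⊗ₘ LinearMap.id) ∘ₗ W := by
        rw [← LinearMap.comp_assoc _ (TensorProduct.assoc ℂ N C C).toLinearMap,
          ← map_rid_comp_map, ← LinearMap.comp_assoc W (W ⊗ₘ LinearMap.id), ← map_comp,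
          LinearMap.comp_id, LinearMap.comp_assoc]
    _ = (f ⊗ₘ μ ∘ₗ (η ∘ₗ s ⊗ₘ g)) ∘ₗ (LinearMap.id ⊗ₘ δ) ∘ₗ W := by rw [hW]
    _ = _ := by rw [← LinearMap.comp_assoc, ← map_comp, LinearMap.comp_id]; rfl

theorem IsCoassoc.rid_comp_map_map_comp (hW : IsCoassoc W) (f : N →ₗ[ℂ] Y) (g : C →ₗ[ℂ] B)
    (s : C →ₗ[ℂ] ℂ) :
    (TensorProduct.rid ℂ (Y ⊗[ℂ] B)).toLinearMap ∘ₗ (((f ⊗ₘ g) ∘ₗ W) ⊗ₘ s) ∘ₗ W =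
      (f ⊗ₘ conv g (η ∘ₗ s)) ∘ₗ W := by
  calc _ = (f ⊗ₘ μ ∘ₗ (g ⊗ₘ η ∘ₗ s)) ∘ₗ (TensorProduct.assoc ℂ N C C).toLinearMap ∘ₗ
          (W ⊗ₘ LinearMap.id) ∘ₗ W := by
        rw [← LinearMap.comp_assoc _ (TensorProduct.assoc ℂ N C C).toLinearMap,
          ← rid_comp_map_map, ← LinearMap.comp_assoc W (W ⊗ₘ LinearMap.id),
          LinearMap.comp_assoc (W ⊗ₘ LinearMap.id), ← map_comp, LinearMap.comp_id,
          LinearMap.comp_assoc]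
    _ = (f ⊗ₘ μ ∘ₗ (g ⊗ₘ η ∘ₗ s)) ∘ₗ (LinearMap.id ⊗ₘ δ) ∘ₗ W := by rw [hW]
    _ = _ := by rw [← LinearMap.comp_assoc, ← map_comp, LinearMap.comp_id]; rfl

end Coaction

section Representation

variable {A H M} (V : H →ₗ[ℂ] H ⊗[ℂ] A) (adV : M →ₗ[ℂ] M ⊗[ℂ] A) (θ : M →ₐ[ℂ] Module.End ℂ H)
  (σ σinv : A ⊗[ℂ] A →ₗ[ℂ] ℂ)

theorem rhoBil_eq :
    rhoBil A H M V adV θ σinv =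
      (TensorProduct.rid ℂ H).toLinearMap ∘ₗ (actB H M θ ⊗ₘ σinv) ∘ₗ coactTensor adV V :=
  rfl

theorem comb_comp_map : comb A H M θ ∘ₗ (adV ⊗ₘ V) = (actB H M θ ⊗ₘ μ) ∘ₗ coactTensor adV V :=
  rfl

theorem Θ'map_comp_map :
    Θ'map A H M V adV θ σ σinv ∘ₗ (adV ⊗ₘ V) =
      (rhoBil A H M V adV θ σinv ⊗ₘ mulTwOf A μ σ σinv) ∘ₗ coactTensor adV V :=
  rfl

theorem comb_comp_map_of_isCovariant (hcov : IsCovariant A H M V adV θ) :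
    comb A H M θ ∘ₗ (adV ⊗ₘ V) = V ∘ₗ actB H M θ := by
  ext a ξ
  exact hcov a ξ

theorem comp_rhoBil_of_isCovariant (hcov : IsCovariant A H M V adV θ) :
    V ∘ₗ rhoBil A H M V adV θ σinv =
      (TensorProduct.rid ℂ (H ⊗[ℂ] A)).toLinearMap ∘ₗ
        ((comb A H M θ ∘ₗ (adV ⊗ₘ V)) ⊗ₘ σinv) ∘ₗ coactTensor adV V := by
  rw [comb_comp_map_of_isCovariant V adV θ hcov, rhoBil_eq]
  simp only [← LinearMap.comp_assoc, rid_comp_map_comp]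

theorem Θmap_comp_map_coact₂ :
    Θmap A H M θ σinv ∘ₗ (coact₂ A adV ⊗ₘ coact₂ A V) =
      (TensorProduct.rid ℂ (H ⊗[ℂ] A)).toLinearMap ∘ₗ
        ((comb A H M θ ∘ₗ (adV ⊗ₘ V)) ⊗ₘ σinv) ∘ₗ coactTensor adV V := by
  simp only [Θmap, coact₂, coactTensor, LinearMap.comp_assoc]
  rw [map_comp, ← LinearMap.comp_assoc (adV ⊗ₘ V), tensorTensorTensorComm_comp_map, map_id,
    LinearMap.comp_assoc, ← LinearMap.comp_assoc _ _ (comb A H M θ ⊗ₘ σinv), ← map_comp,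
    LinearMap.comp_id]

theorem comp_rhoBil_eq_Θmap_comp (hcov : IsCovariant A H M V adV θ) :
    V ∘ₗ rhoBil A H M V adV θ σinv = Θmap A H M θ σinv ∘ₗ (coact₂ A adV ⊗ₘ coact₂ A V) := by
  rw [comp_rhoBil_of_isCovariant V adV θ σinv hcov, Θmap_comp_map_coact₂]

theorem comp_rhoBil_eq_Θ'map_comp (hV : IsCoassoc V) (hadV : IsCoassoc adV)
    (hcov : IsCovariant A H M V adV θ) (hinv : conv σinv σ = ε) :
    V ∘ₗ rhoBil A H M V adV θ σinv = Θ'map A H M V adV θ σ σinv ∘ₗ (adV ⊗ₘ V) := by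
  have hW := hadV.coactTensor hV
  rw [comp_rhoBil_of_isCovariant V adV θ σinv hcov, comb_comp_map, hW.rid_comp_map_map_comp,
    Θ'map_comp_map, rhoBil_eq, hW.map_rid_comp_map_comp, ← toA, conv_toA_mulTwOf A μ hinv]

end Representation

theorem twisted_coaction_covariant
    (V : H →ₗ[ℂ] H ⊗[ℂ] A) (adV : M →ₗ[ℂ] M ⊗[ℂ] A) (θ : M →ₐ[ℂ] Module.End ℂ H)
    (hV : IsCoaction A V) (hadV : IsCoaction A adV)
    (hcov : IsCovariant A H M V adV θ)
    (σ σinv : A ⊗[ℂ] A →ₗ[ℂ] ℂ)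
    (hinv : AreConvInverse A σ σinv) :
    ∀ (a : M) (ξ : H),
      V (rhoσ A H M V adV θ σinv a ξ) =
        Θmap A H M θ σinv (coact₂ A adV a ⊗ₜ coact₂ A V ξ) ∧
      V (rhoσ A H M V adV θ σinv a ξ) =
        Θ'map A H M V adV θ σ σinv (adV a ⊗ₜ V ξ) := fun a ξ =>
  ⟨LinearMap.congr_fun (comp_rhoBil_eq_Θmap_comp V adV θ σinv hcov) (a ⊗ₜ ξ),
    LinearMap.congr_fun (comp_rhoBil_eq_Θ'map_comp V adV θ σ σinv hV.1 hadV.1 hcov hinv.2)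
      (a ⊗ₜ ξ)⟩

end CocycleTwist
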